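/- uc(T) ≤ |N2| + e(T), where uc(T) is the number of pairs (x, a) such that x ∈ N2 ∪ Q, a is a character, and some non-crossing occurrence of x in T' is immediately followed by a. -/

import Mathlib

open scoped Classical

namespace CDAWG

variable {α : Type*} [DecidableEq α]

/-- The finite set of contiguous substrings (infixes) of `T`. -/
def infixes (T : List α) : Finset (List α) := (T.tails.flatMap List.inits).toFinset

/-- `x` occurs in `S` starting at the 1-based position `j`
    (i.e. `x = S[j..j+|x|-1]`). -/
def OccAt (S x : List α) (j : ℕ) : Prop :=
  1 ≤ j ∧ x ≠ [] ∧ j + x.length - 1 ≤ S.length ∧ (S.drop (j - 1)).take x.length = x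

/-- `x` is a left-maximal substring of `T`. -/
def LeftMax (T x : List α) : Prop :=
  x <:+: T ∧ ((∃ a b : α, a ≠ b ∧ (a :: x) <:+: T ∧ (b :: x) <:+: T) ∨ x <+: T)

/-- `x` is a right-maximal substring of `T`. -/
def RightMax (T x : List α) : Prop :=
  x <:+: T ∧ ((∃ a b : α, a ≠ b ∧ (x ++ [a]) <:+: T ∧ (x ++ [b]) <:+: T) ∨ x <:+ T)

/-- `LeftM(T)`: the set of left-maximal substrings of `T`. -/
noncomputable def LeftMfin (T : List α) : Finset (List α) :=
  (infixes T).filter (fun x => LeftMax T x)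

/-- `RightM(T)`: the set of right-maximal substrings of `T`. -/
noncomputable def RightMfin (T : List α) : Finset (List α) :=
  (infixes T).filter (fun x => RightMax T x)

/-- `M(T) = LeftM(T) ∩ RightM(T)`: the maximal substrings of `T`. -/
noncomputable def Mfin (T : List α) : Finset (List α) :=
  (infixes T).filter (fun x => LeftMax T x ∧ RightMax T x)

/-- `MR(T) = M(T) \ {T}`: the maximal repeats of `T`. -/
noncomputable def MRfin (T : List α) : Finset (List α) := (Mfin T).erase T

/-- `D_T(x)`: the number of distinct characters `a` with `xa` a substring of `T`. -/
noncomputable def D (T x : List α) : ℕ :=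
  ((infixes T).filter (fun w => w.length = x.length + 1 ∧ x <+: w)).card

/-- The CDAWG size `e(T) = Σ_{x ∈ MR(T)} D_T(x)`. -/
noncomputable def esize (T : List α) : ℕ := ∑ x ∈ MRfin T, D T x

/-- `T` terminates with a unique end-marker: its last character occurs
    nowhere else in `T`. -/
def EndMarked (T : List α) : Prop := ∃ c, T.getLast? = some c ∧ T.count c = 1

/-- `rrep_T(S) = Sβ` where `β` is the shortest string such that `Sβ` is
    right-maximal in `T`. -/
noncomputable def rrep (T S : List α) : List α :=
  Classical.epsilon (fun w => S <+: w ∧ w <:+: T ∧ RightMax T w ∧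
    ∀ w', S <+: w' → w' <:+: T → RightMax T w' → w.length ≤ w'.length)

/-- The in-degree of node `x` in the CDAWG of `T`: the number of pairs `(y, a)`
    with `y ∈ MR(T)`, `ya` a substring of `T` and `rrep_T(ya) = x`. -/
noncomputable def indeg (T x : List α) : ℕ :=
  ((MRfin T ×ˢ T.toFinset).filter
    (fun p => (p.1 ++ [p.2]) <:+: T ∧ rrep T (p.1 ++ [p.2]) = x)).card

/-- `I_T(x)`: the set of nodes having an edge to `x` in the CDAWG of `T`. -/
noncomputable def Ifin (T x : List α) : Finset (List α) :=
  (MRfin T).filter (fun y => ∃ a, (y ++ [a]) <:+: T ∧ rrep T (y ++ [a]) = x)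

/-- `v1(T)`: the number of nodes of in-degree 1 in the CDAWG of `T`. -/
noncomputable def v1 (T : List α) : ℕ :=
  ((Mfin T).filter (fun x => indeg T x = 1)).card

/-- The CDAWG-grammar size `g(T) = e(T) - v1(T)`. -/
noncomputable def gsize (T : List α) : ℕ := esize T - v1 T

/-- A single-character edit operation. -/
inductive Edit (α : Type*) where
  | ins : α → Edit α
  | del : Edit α
  | sub : α → Edit α

/-- Applying a single-character edit at the 1-based position `i`. -/
def Edit.apply (T : List α) (i : ℕ) : Edit α → List α
  | .ins c => T.take (i - 1) ++ c :: T.drop (i - 1)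
  | .del => T.take (i - 1) ++ T.drop i
  | .sub c => T.take (i - 1) ++ c :: T.drop i

/-- Validity of the edit position. -/
def Edit.valid (T : List α) (i : ℕ) : Edit α → Prop
  | .ins _ => 1 ≤ i ∧ i ≤ T.length + 1
  | .del => 1 ≤ i ∧ i ≤ T.length
  | .sub _ => 1 ≤ i ∧ i ≤ T.length

/-- Whether the edit is a deletion. -/
def Edit.isDel : Edit α → Bool
  | .del => true
  | _ => false

/-- The occurrence of `x` in `T'` starting at `j` (and ending at
    `k = j + |x| - 1`) is a crossing occurrence for the edited position `i`. -/
def CrossAt (isDel : Bool) (i : ℕ) (T' x : List α) (j : ℕ) : Prop :=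
  OccAt T' x j ∧
    (if isDel then
      (j + x.length - 1 = i - 1 ∨ (j ≤ i - 1 ∧ i ≤ j + x.length - 1) ∨ j = i)
    else
      (j + x.length - 1 = i - 1 ∨ (j ≤ i ∧ i ≤ j + x.length - 1) ∨ j = i + 1))

/-- Starting position of the leftmost crossing occurrence `x_L` of `x` in `T'`. -/
noncomputable def jL (isDel : Bool) (i : ℕ) (T' x : List α) : ℕ :=
  sInf {j | CrossAt isDel i T' x j}

/-- Starting position of the rightmost crossing occurrence `x_R` of `x` in `T'`. -/
noncomputable def jR (isDel : Bool) (i : ℕ) (T' x : List α) : ℕ :=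
  sSup {j | CrossAt isDel i T' x j}

/-- `S_{x_G}` for the crossing occurrence of `x` starting at `j` and ending at
    `k = j + |x| - 1`: it is `ε` if `k = i - 1`, and `T'[i..k]` otherwise. -/
def Socc (i : ℕ) (T' x : List α) (j : ℕ) : List α :=
  if j + x.length - 1 = i - 1 then [] else (T'.drop (i - 1)).take (j + x.length - 1 - i + 1)

/-- `S_{x_L}`. -/
noncomputable def SL (isDel : Bool) (i : ℕ) (T' x : List α) : List α :=
  Socc i T' x (jL isDel i T' x)

/-- `S_{x_R}`. -/
noncomputable def SR (isDel : Bool) (i : ℕ) (T' x : List α) : List α :=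
  Socc i T' x (jR isDel i T' x)

/-- `N = (M(T') \ M(T)) \ {T'}`. -/
noncomputable def Nfin (T T' : List α) : Finset (List α) := (Mfin T' \ Mfin T).erase T'

/-- `N1 = N ∩ RightM(T)`. -/
noncomputable def N1 (T T' : List α) : Finset (List α) := Nfin T T' ∩ RightMfin T

/-- `N2 = N ∩ LeftM(T)`. -/
noncomputable def N2 (T T' : List α) : Finset (List α) := Nfin T T' ∩ LeftMfin T

/-- `N3 = N \ (N1 ∪ N2)`. -/
noncomputable def N3 (T T' : List α) : Finset (List α) :=
  Nfin T T' \ (N1 T T' ∪ N2 T T')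

/-- `Q = MR(T') ∩ MR(T)`. -/
noncomputable def Q (T T' : List α) : Finset (List α) := MRfin T' ∩ MRfin T

/-- `Nadd`: the set of `x ∈ N3` such that (1) `x` would be a maximal repeat of
    `T'` even if all occurrences of `x` in `T'` were crossing occurrences
    (i.e. the crossing occurrences alone witness left- and right-maximality),
    and (2) `x` has no right-extension in `T'` other than the right-extensions
    of its crossing occurrences. -/
noncomputable def Nadd (isDel : Bool) (i : ℕ) (T T' : List α) : Finset (List α) :=
  (N3 T T').filter (fun x =>
    (((∃ a b : α, a ≠ b ∧ (∃ j, CrossAt isDel i T' x j ∧ OccAt T' (a :: x) (j - 1)) ∧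
          (∃ j, CrossAt isDel i T' x j ∧ OccAt T' (b :: x) (j - 1)))
        ∨ (∃ j, CrossAt isDel i T' x j ∧ j = 1))
      ∧ ((∃ a b : α, a ≠ b ∧ (∃ j, CrossAt isDel i T' x j ∧ OccAt T' (x ++ [a]) j) ∧
          (∃ j, CrossAt isDel i T' x j ∧ OccAt T' (x ++ [b]) j))
        ∨ (∃ j, CrossAt isDel i T' x j ∧ j + x.length - 1 = T'.length)))
    ∧ (∀ a : α, (x ++ [a]) <:+: T' → ∃ j, CrossAt isDel i T' x j ∧ OccAt T' (x ++ [a]) j))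

/-- `Nbase = N3 \ Nadd`. -/
noncomputable def Nbase (isDel : Bool) (i : ℕ) (T T' : List α) : Finset (List α) :=
  N3 T T' \ Nadd isDel i T T'

/-- `N1 ∪ Nbase`. -/
noncomputable def NB (isDel : Bool) (i : ℕ) (T T' : List α) : Finset (List α) :=
  N1 T T' ∪ Nbase isDel i T T'

/-- `S_x`: the string associated with `x ∈ N1 ∪ Nbase`; it is `S_{x_L}` if no
    strictly longer `y ∈ N1 ∪ Nbase` has `S_{y_G} = S_{x_L}` for some
    `G ∈ {L, R}`, and `S_{x_R}` otherwise. -/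
noncomputable def Sx (isDel : Bool) (i : ℕ) (T T' x : List α) : List α :=
  if ∃ y ∈ NB isDel i T T', x.length < y.length ∧
      (SL isDel i T' y = SL isDel i T' x ∨ SR isDel i T' y = SL isDel i T' x)
  then SR isDel i T' x else SL isDel i T' x

/-- `U(x)`: the shortest string of the form `γ · S_x` that is a substring of `T`
    and left-maximal in `T`. -/
noncomputable def U (isDel : Bool) (i : ℕ) (T T' x : List α) : List α :=
  Classical.epsilon (fun w => Sx isDel i T T' x <:+ w ∧ w <:+: T ∧ LeftMax T w ∧
    ∀ w', Sx isDel i T T' x <:+ w' → w' <:+: T → LeftMax T w' → w.length ≤ w'.length)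

/-- `Nmax`: those `x ∈ N1 ∪ Nbase` with `D_{T'}(x) = D_T(U(x)) + 2`. -/
noncomputable def Nmax (isDel : Bool) (i : ℕ) (T T' : List α) : Finset (List α) :=
  (NB isDel i T T').filter (fun x => D T' x = D T (U isDel i T T' x) + 2)

/-- `Nmid`: those `x ∈ N1 ∪ Nbase` with `D_{T'}(x) = D_T(U(x)) + 1`. -/
noncomputable def Nmid (isDel : Bool) (i : ℕ) (T T' : List α) : Finset (List α) :=
  (NB isDel i T T').filter (fun x => D T' x = D T (U isDel i T T' x) + 1)

/-- `Nless`: those `x ∈ N1 ∪ Nbase` with `D_{T'}(x) ≤ D_T(U(x))`. -/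
noncomputable def Nless (isDel : Bool) (i : ℕ) (T T' : List α) : Finset (List α) :=
  (NB isDel i T T').filter (fun x => D T' x ≤ D T (U isDel i T T' x))

/-- The unique parent `y` of a node `x` of in-degree 1. -/
noncomputable def parent (T x : List α) : List α :=
  Classical.epsilon (fun y => y ∈ Ifin T x)

/-- `q`: the longest proper suffix of `x` belonging to `MR(T)`. -/
noncomputable def qsuf (T x : List α) : List α :=
  Classical.epsilon (fun q => q <:+ x ∧ q ≠ x ∧ q ∈ MRfin T ∧
    ∀ q', q' <:+ x → q' ≠ x → q' ∈ MRfin T → q'.length ≤ q.length)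

/-- `V1(T)`: nodes `x ∈ MR(T)` of in-degree 1 with `x ∉ MR(T')`. -/
noncomputable def V1set (T T' : List α) : Finset (List α) :=
  (MRfin T).filter (fun x => indeg T x = 1 ∧ x ∉ MRfin T')

/-- `V2(T)`: nodes `x ∈ MR(T)` of in-degree 1 whose in-degree in the CDAWG of
    `T'` is at least 2. -/
noncomputable def V2set (T T' : List α) : Finset (List α) :=
  (MRfin T).filter (fun x => indeg T x = 1 ∧ 2 ≤ indeg T' x)

/-- `Va(T) = {x ∈ V2(T) : y ∉ MR(T')}`. -/
noncomputable def Va (T T' : List α) : Finset (List α) :=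
  (V2set T T').filter (fun x => parent T x ∉ MRfin T')

/-- `Vb(T) = {x ∈ V2(T) : y ∈ MR(T'), q ∉ MR(T')}`. -/
noncomputable def Vb (T T' : List α) : Finset (List α) :=
  (V2set T T').filter (fun x => parent T x ∈ MRfin T' ∧ qsuf T x ∉ MRfin T')

/-- `Vc(T) = {x ∈ V2(T) : y ∈ MR(T'), q ∈ MR(T')}`. -/
noncomputable def Vc (T T' : List α) : Finset (List α) :=
  (V2set T T').filter (fun x => parent T x ∈ MRfin T' ∧ qsuf T x ∈ MRfin T')

/-- The starting position of the occurrence of `z` in `w` determined by the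
    in-edge from `z` to `w` in the CDAWG of `T'`: the occurrence such that `z`
    followed by the edge label is a suffix of `w`. -/
noncomputable def detStart (T' z w : List α) : ℕ :=
  Classical.epsilon (fun s => ∃ l a, (z ++ [a]) <:+: T' ∧ rrep T' (z ++ [a]) = w ∧
    z ++ l = w ∧ l.head? = some a ∧ s + z.length + l.length = w.length + 1)

/-- The element of `I_{T'}(w)` whose occurrence in `w` determined by its in-edge
    ends at the rightmost position (the shortest one in case of ties). -/
noncomputable def zsel (T' w : List α) : List α :=
  Classical.epsilon (fun z => z ∈ Ifin T' w ∧
    (∀ z' ∈ Ifin T' w, detStart T' z' w + z'.length ≤ detStart T' z w + z.length) ∧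
    (∀ z' ∈ Ifin T' w, detStart T' z' w + z'.length = detStart T' z w + z.length →
      z.length ≤ z'.length))

/-- The sequence `z_0, z_1, z_2, …` for `x`. -/
noncomputable def zseq (T' x : List α) : ℕ → List α
  | 0 => zsel T' x
  | i + 1 => zsel T' (zseq T' x i)

/-- The index `l` at which the sequence `z_i` stops: the least `i` such that
    `z_i` is a suffix of `y` or `z_i` has in-degree 1 in the CDAWG of `T'`. -/
noncomputable def lIdx (T T' x : List α) : ℕ :=
  sInf {k | zseq T' x k <:+ parent T x ∨ indeg T' (zseq T' x k) = 1}

/-- `z_l(x)`: the last defined `z_i`. -/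
noncomputable def zl (T T' x : List α) : List α := zseq T' x (lIdx T T' x)

/-- The starting position (within `x`) of the composed occurrence of `z_i`
    in `x`, obtained by composing the in-edge occurrences. -/
noncomputable def cstart (T' x : List α) : ℕ → ℕ
  | 0 => detStart T' (zseq T' x 0) x
  | i + 1 => cstart T' x i + detStart T' (zseq T' x (i + 1)) (zseq T' x i) - 1

/-- `Vbt(T)`: the set of `x ∈ Vc(T)` such that `z_l(x)` has in-degree 1 in the
    CDAWG of `T'` and is not a suffix of `y`. -/
noncomputable def Vbt (T T' : List α) : Finset (List α) :=
  (Vc T T').filter (fun x => indeg T' (zl T T' x) = 1 ∧ ¬ (zl T T' x <:+ parent T x))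

/-- `Val(T)`: the set of `x ∈ Vc(T)` such that `z_l(x)` is a suffix of `y`. -/
noncomputable def Valset (T T' : List α) : Finset (List α) :=
  (Vc T T').filter (fun x => zl T T' x <:+ parent T x)

/-- `V_Y(T)`: the set of the unique parents `y` of the strings `x ∈ Val(T)`. -/
noncomputable def VY (T T' : List α) : Finset (List α) :=
  (Valset T T').image (parent T)

/-- `Valz2`: strings `z_l(x)`, `x ∈ Val(T)`, with `D_{T'}(z_l) = D_T(U(z_l)) + 2`. -/
noncomputable def Valz2 (isDel : Bool) (i : ℕ) (T T' : List α) : Finset (List α) :=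
  ((Valset T T').image (zl T T')).filter (fun z => D T' z = D T (U isDel i T T' z) + 2)

/-- `Valz1`: strings `z_l(x)`, `x ∈ Val(T)`, with `D_{T'}(z_l) = D_T(U(z_l)) + 1`. -/
noncomputable def Valz1 (isDel : Bool) (i : ℕ) (T T' : List α) : Finset (List α) :=
  ((Valset T T').image (zl T T')).filter (fun z => D T' z = D T (U isDel i T T' z) + 1)

/-- `Valz0`: strings `z_l(x)`, `x ∈ Val(T)`, with `D_{T'}(z_l) ≤ D_T(U(z_l))`. -/
noncomputable def Valz0 (isDel : Bool) (i : ℕ) (T T' : List α) : Finset (List α) :=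
  ((Valset T T').image (zl T T')).filter (fun z => D T' z ≤ D T (U isDel i T T' z))

/-- `uc(T)`: the pairs `(x, a)` with `x ∈ N2 ∪ Q`, `a` a character, and some
non-crossing occurrence of `x` in `T'` immediately followed by `a`. -/
noncomputable def ucPairs (isDel : Bool) (i : ℕ) (T T' : List α) : Finset (List α × α) :=
  ((N2 T T' ∪ Q T T') ×ˢ T'.toFinset).filter
    (fun p => ∃ j, OccAt T' p.1 j ∧ ¬ CrossAt isDel i T' p.1 j ∧ OccAt T' (p.1 ++ [p.2]) j)

end CDAWG

namespace CDAWG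

lemma mem_infixes {α : Type*} [DecidableEq α] {T x : List α} :
    x ∈ infixes T ↔ x <:+: T := by
  simp only [infixes, List.mem_toFinset, List.mem_flatMap, List.mem_tails, List.mem_inits,
    List.infix_iff_prefix_suffix]
  tauto

lemma key_infix {α : Type*} [DecidableEq α] {T T' : List α} {i : ℕ} {ed : Edit α}
    (hval : ed.valid T i) (happ : T' = ed.apply T i) {x : List α} {a : α} {j : ℕ}
    (hocc : OccAt T' x j) (hnc : ¬ CrossAt ed.isDel i T' x j)
    (hocca : OccAt T' (x ++ [a]) j) : (x ++ [a]) <:+: T := by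
  obtain ⟨hj, hxne, hk, hx⟩ := hocc
  have hxa : (T'.drop (j - 1)).take (x.length + 1) = x ++ [a] := by
    have := hocca.2.2.2
    simpa using this
  have hL : 1 ≤ x.length := List.length_pos_iff.mpr hxne
  -- generic left-case helper
  have hleft : ∀ (hlen : i - 1 ≤ T.length) (hTake : T'.take (i-1) = T.take (i-1))
      (hle : j + x.length ≤ i - 1), (x ++ [a]) <:+: T := by
    intro hlen hTake hle
    have e2 : (T'.take (i-1)).drop (j-1) = (T'.drop (j-1)).take (i-1-(j-1)) :=
      List.drop_take
    have e1 : x ++ [a] = ((T'.drop (j-1)).take (i-1-(j-1))).take (x.length+1) := by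
      rw [List.take_take, min_eq_left (by omega)]
      exact hxa.symm
    have hpre : x ++ [a] <+: (T'.take (i-1)).drop (j-1) := by
      rw [e2, e1]; exact List.take_prefix _ _
    rw [hTake] at hpre
    exact hpre.isInfix.trans ((List.drop_suffix _ _).isInfix.trans
      (List.take_prefix _ _).isInfix)
  -- generic right-case helper
  have hright : ∀ (s : ℕ) (hDrop : T'.drop (j-1) = T.drop s), (x ++ [a]) <:+: T := by
    intro s hDrop
    have hpre : x ++ [a] <+: T.drop s := by
      rw [← hDrop, ← hxa]; exact List.take_prefix _ _
    exact hpre.isInfix.trans (List.drop_suffix _ _).isInfix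
  rcases ed with c | _ | c
  · -- insertion
    obtain ⟨hi1, hi2⟩ := hval
    have hlenP : (T.take (i-1)).length = i - 1 := by
      rw [List.length_take]; omega
    have hcond : ¬ (j + x.length - 1 = i - 1 ∨ (j ≤ i ∧ i ≤ j + x.length - 1) ∨ j = i + 1) := by
      intro h
      exact hnc ⟨⟨hj, hxne, hk, hx⟩, by simpa [Edit.isDel] using h⟩
    push_neg at hcond
    rcases (show j + x.length ≤ i - 1 ∨ i + 1 ≤ j by omega) with hle | hge
    · refine hleft (by omega) ?_ hle
      rw [happ]
      exact List.take_left' hlenP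
    · refine hright (j - 2) ?_
      rw [happ]
      have e : j - 1 = (T.take (i-1)).length + (j - i) := by rw [hlenP]; omega
      rw [show Edit.apply T i (Edit.ins c) = T.take (i-1) ++ (c :: T.drop (i-1)) from rfl,
        e, List.drop_length_add_append, show j - i = (j - i - 1) + 1 by omega, List.drop_succ_cons,
        List.drop_drop]
      congr 1; omega
  · -- deletion
    obtain ⟨hi1, hi2⟩ := hval
    have hlenP : (T.take (i-1)).length = i - 1 := by
      rw [List.length_take]; omega
    have hcond : ¬ (j + x.length - 1 = i - 1 ∨ (j ≤ i - 1 ∧ i ≤ j + x.length - 1) ∨ j = i) := by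
      intro h
      exact hnc ⟨⟨hj, hxne, hk, hx⟩, by simpa [Edit.isDel] using h⟩
    push_neg at hcond
    rcases (show j + x.length ≤ i - 1 ∨ i + 1 ≤ j by omega) with hle | hge
    · refine hleft (by omega) ?_ hle
      rw [happ]
      exact List.take_left' hlenP
    · refine hright j ?_
      rw [happ]
      have e : j - 1 = (T.take (i-1)).length + (j - i) := by rw [hlenP]; omega
      rw [show Edit.apply T i Edit.del = T.take (i-1) ++ T.drop i from rfl,
        e, List.drop_length_add_append, List.drop_drop]
      congr 1; omega
  · -- substitution
    obtain ⟨hi1, hi2⟩ := hval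
    have hlenP : (T.take (i-1)).length = i - 1 := by
      rw [List.length_take]; omega
    have hcond : ¬ (j + x.length - 1 = i - 1 ∨ (j ≤ i ∧ i ≤ j + x.length - 1) ∨ j = i + 1) := by
      intro h
      exact hnc ⟨⟨hj, hxne, hk, hx⟩, by simpa [Edit.isDel] using h⟩
    push_neg at hcond
    rcases (show j + x.length ≤ i - 1 ∨ i + 1 ≤ j by omega) with hle | hge
    · refine hleft (by omega) ?_ hle
      rw [happ]
      exact List.take_left' hlenP
    · refine hright (j - 1) ?_
      rw [happ]
      have e : j - 1 = (T.take (i-1)).length + (j - i) := by rw [hlenP]; omega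
      rw [show Edit.apply T i (Edit.sub c) = T.take (i-1) ++ (c :: T.drop i) from rfl,
        e, List.drop_length_add_append, show j - i = (j - i - 1) + 1 by omega, List.drop_succ_cons,
        List.drop_drop]
      congr 1; omega

end CDAWG


/-- `uc(T) ≤ |N2| + e(T)`. -/
theorem stmt4 {α : Type*} [DecidableEq α] (T T' : List α) (i : ℕ) (ed : CDAWG.Edit α)
    (hval : CDAWG.Edit.valid T i ed) (happ : T' = CDAWG.Edit.apply T i ed)
    (hend : ∃ c : α, T.getLast? = some c ∧ T.count c = 1 ∧
      T'.getLast? = some c ∧ T'.count c = 1) :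
    (CDAWG.ucPairs ed.isDel i T T').card ≤ (CDAWG.N2 T T').card + CDAWG.esize T := by
  classical
  -- every pair in ucPairs extends to a substring of T
  have hext : ∀ p ∈ CDAWG.ucPairs ed.isDel i T T', (p.1 ++ [p.2]) <:+: T := by
    intro p hp
    obtain ⟨-, j, h1, h2, h3⟩ := Finset.mem_filter.mp hp
    exact CDAWG.key_infix hval happ h1 h2 h3
  have hmemU : ∀ p ∈ CDAWG.ucPairs ed.isDel i T T',
      p.1 ∈ CDAWG.N2 T T' ∪ CDAWG.Q T T' := by
    intro p hp
    exact (Finset.mem_product.mp (Finset.mem_filter.mp hp).1).1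
  set P := CDAWG.ucPairs ed.isDel i T T' with hP
  have hsplit := Finset.card_filter_add_card_filter_not
    (s := P) (p := fun p => p.1 ∈ CDAWG.N2 T T')
  have h1 : (P.filter (fun p => p.1 ∈ CDAWG.N2 T T')).card ≤ (CDAWG.N2 T T').card := by
    apply Finset.card_le_card_of_injOn Prod.fst
    · intro p hp; exact (Finset.mem_filter.mp hp).2
    · intro p hp q hq hfst
      obtain ⟨hpP, hpN2⟩ := Finset.mem_filter.mp hp
      obtain ⟨hqP, -⟩ := Finset.mem_filter.mp hq
      have hxa : (p.1 ++ [p.2]) <:+: T := hext p hpP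
      have hxb : (q.1 ++ [q.2]) <:+: T := hext q hqP
      rw [← hfst] at hxb
      refine Prod.ext hfst ?_
      by_contra hne
      -- x is right-maximal in T, hence maximal, contradicting x ∈ N
      obtain ⟨hpNf, hpLM⟩ := Finset.mem_inter.mp hpN2
      obtain ⟨-, hsd⟩ := Finset.mem_erase.mp hpNf
      obtain ⟨-, hnotM⟩ := Finset.mem_sdiff.mp hsd
      obtain ⟨hinf, hLmax⟩ := Finset.mem_filter.mp hpLM
      apply hnotM
      refine Finset.mem_filter.mpr ⟨hinf, hLmax, ?_⟩
      exact ⟨CDAWG.mem_infixes.mp hinf, Or.inl ⟨p.2, q.2, hne, hxa, hxb⟩⟩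
  have h2 : (P.filter (fun p => ¬ p.1 ∈ CDAWG.N2 T T')).card ≤ CDAWG.esize T := by
    have hes : CDAWG.esize T = ((CDAWG.MRfin T).sigma fun x =>
        (CDAWG.infixes T).filter (fun w => w.length = x.length + 1 ∧ x <+: w)).card :=
      (Finset.card_sigma _ _).symm
    rw [hes]
    apply Finset.card_le_card_of_injOn (fun p => (⟨p.1, p.1 ++ [p.2]⟩ : Σ _ : List α, List α))
    · intro p hp
      obtain ⟨hpP, hpnN2⟩ := Finset.mem_filter.mp hp
      have hU := hmemU p hpP
      have hpQ : p.1 ∈ CDAWG.Q T T' := by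
        rcases Finset.mem_union.mp hU with h | h
        · exact absurd h hpnN2
        · exact h
      have hMR : p.1 ∈ CDAWG.MRfin T := (Finset.mem_inter.mp hpQ).2
      refine Finset.mem_sigma.mpr ⟨hMR, ?_⟩
      refine Finset.mem_filter.mpr ⟨CDAWG.mem_infixes.mpr (hext p hpP), ?_, ?_⟩
      · simp
      · exact List.prefix_append _ _
    · intro p hp q hq heq
      have h1' : p.1 = q.1 := congrArg Sigma.fst heq
      have h2'' : p.1 ++ [p.2] = q.1 ++ [q.2] :=
        congrArg (fun s : Σ _ : List α, List α => s.2) heq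
      rw [h1'] at h2''
      have := List.append_cancel_left h2''
      refine Prod.ext h1' ?_
      simpa using this
  calc P.card = (P.filter (fun p => p.1 ∈ CDAWG.N2 T T')).card
        + (P.filter (fun p => ¬ p.1 ∈ CDAWG.N2 T T')).card := hsplit.symm
    _ ≤ (CDAWG.N2 T T').card + CDAWG.esize T := Nat.add_le_add h1 h2
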